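/- arXiv:1807.06367 — 2 statements merged into one kernel-verified Lean document; each statement's English description precedes it below -/
import Mathlib

section
/- Let y_1, …, y_n ∈ ℝ^d, a > 0, and define f̂(x) = (1/n) Σ_{j=1}^n (2πa)^{-d/2} exp(-‖x - y_j‖²/(2a)). Then ∫_{ℝ^d} ((1/√n) Σ_{j=1}^n sin(tᵀ y_j))² exp(-a‖t‖²) dt = (n(2π)^d / 4) ∫_{ℝ^d} (f̂(x) - f̂(-x))² dx. -/
open MeasureTheory Real
open scoped RealInnerProductSpace

section helpers
variable {d : ℕ} {a : ℝ}

local notation "E" => EuclideanSpace ℝ (Fin d)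

lemma integrable_gauss (ha : 0 < a) :
    Integrable (fun t : E => rexp (-a * ‖t‖ ^ 2)) := by
  have ha' : 0 < (a : ℂ).re := by simpa using ha
  have h := (GaussianFourier.integrable_cexp_neg_mul_sq_norm_add
    (V := E) ha' 0 (0 : E)).re
  refine h.congr (Filter.Eventually.of_forall fun t => ?_)
  have : (-(a : ℂ) * ‖t‖ ^ 2 + 0 * ⟪(0 : E), t⟫) = ((-a * ‖t‖ ^ 2 : ℝ) : ℂ) := by
    push_cast; ring
  simp only [this, ← Complex.ofReal_exp, Complex.ofReal_re, RCLike.re_to_complex]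

lemma integrable_bdd_gauss (ha : 0 < a) {g : E → ℝ} (hg : Continuous g)
    (hb : ∀ t, |g t| ≤ 1) :
    Integrable (fun t : E => g t * rexp (-a * ‖t‖ ^ 2)) := by
  refine (integrable_gauss ha).mono' ?_ ?_
  · exact (hg.mul (by fun_prop)).aestronglyMeasurable
  · refine Filter.Eventually.of_forall fun t => ?_
    rw [Real.norm_eq_abs, abs_mul, abs_of_pos (Real.exp_pos _)]
    exact mul_le_of_le_one_left (Real.exp_pos _).le (hb t)

lemma cos_gauss (ha : 0 < a) (v : E) :
    ∫ t : E, Real.cos ⟪v, t⟫ * rexp (-a * ‖t‖ ^ 2)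
      = (π / a) ^ ((d : ℝ) / 2) * rexp (-‖v‖ ^ 2 / (4 * a)) := by
  have ha' : 0 < (a : ℂ).re := by simpa using ha
  have key := GaussianFourier.integral_cexp_neg_mul_sq_norm_add
    (V := E) ha' Complex.I v
  have hint := GaussianFourier.integrable_cexp_neg_mul_sq_norm_add
    (V := E) ha' Complex.I v
  have hre : ∀ t : EuclideanSpace ℝ (Fin d),
      (Complex.exp (-(a : ℂ) * ‖t‖ ^ 2 + Complex.I * ⟪v, t⟫)).re
        = Real.cos ⟪v, t⟫ * rexp (-a * ‖t‖ ^ 2) := by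
    intro t
    rw [Complex.exp_add]
    have h1 : (-(a : ℂ) * ‖t‖ ^ 2) = ((-a * ‖t‖ ^ 2 : ℝ) : ℂ) := by push_cast; ring
    rw [h1, ← Complex.ofReal_exp,
      show (Complex.I * ⟪v, t⟫) = ((⟪v, t⟫ : ℝ) : ℂ) * Complex.I by ring,
      Complex.exp_mul_I, ← Complex.ofReal_cos, ← Complex.ofReal_sin]
    simp only [Complex.mul_re, Complex.add_re, Complex.add_im, Complex.ofReal_re,
      Complex.ofReal_im, Complex.mul_im, Complex.I_re, Complex.I_im]
    ring
  have hLHS : ∫ t : E, Real.cos ⟪v, t⟫ * rexp (-a * ‖t‖ ^ 2)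
      = (∫ t : EuclideanSpace ℝ (Fin d), Complex.exp (-(a : ℂ) * ‖t‖ ^ 2 + Complex.I * ⟪v, t⟫)).re := by
    rw [show ((∫ t : EuclideanSpace ℝ (Fin d), Complex.exp (-(a : ℂ) * ‖t‖ ^ 2 + Complex.I * ⟪v, t⟫)).re : ℝ)
        = RCLike.re (∫ t : EuclideanSpace ℝ (Fin d), Complex.exp (-(a : ℂ) * ‖t‖ ^ 2 + Complex.I * ⟪v, t⟫)) from rfl,
      ← integral_re hint]
    exact integral_congr_ae (Filter.Eventually.of_forall fun t => (hre t).symm)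
  rw [hLHS, key]
  have hfr : Module.finrank ℝ E = d := finrank_euclideanSpace_fin
  rw [hfr]
  have h2 : ((π : ℂ) / a) ^ ((d : ℂ) / 2) = (((π / a) ^ ((d : ℝ) / 2) : ℝ) : ℂ) := by
    rw [Complex.ofReal_cpow (by positivity)]
    push_cast
    ring_nf
  have h3 : Complex.exp (Complex.I ^ 2 * ‖v‖ ^ 2 / (4 * a))
      = ((rexp (-‖v‖ ^ 2 / (4 * a)) : ℝ) : ℂ) := by
    rw [Complex.I_sq, Complex.ofReal_exp]
    push_cast
    ring_nf
  rw [h2, h3, ← Complex.ofReal_mul, Complex.ofReal_re]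

lemma integrable_sinsin_gauss (ha : 0 < a) (u w : E) :
    Integrable (fun t : E => Real.sin ⟪t, u⟫ * Real.sin ⟪t, w⟫ * rexp (-a * ‖t‖ ^ 2)) := by
  have hc : Continuous fun t : E => Real.sin ⟪t, u⟫ * Real.sin ⟪t, w⟫ :=
    (Real.continuous_sin.comp (continuous_id.inner continuous_const)).mul
      (Real.continuous_sin.comp (continuous_id.inner continuous_const))
  refine integrable_bdd_gauss ha hc ?_
  · intro t
    rw [abs_mul]
    exact mul_le_one₀ (Real.abs_sin_le_one _) (abs_nonneg _) (Real.abs_sin_le_one _)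

lemma integrable_cos_gauss (ha : 0 < a) (v : E) :
    Integrable (fun t : E => Real.cos ⟪v, t⟫ * rexp (-a * ‖t‖ ^ 2)) := by
  exact integrable_bdd_gauss ha
    (Real.continuous_cos.comp (continuous_const.inner continuous_id))
    fun t => Real.abs_cos_le_one _

lemma sinsin_gauss (ha : 0 < a) (u w : E) :
    ∫ t : E, Real.sin ⟪t, u⟫ * Real.sin ⟪t, w⟫ * rexp (-a * ‖t‖ ^ 2)
      = (π / a) ^ ((d : ℝ) / 2)
          * (rexp (-‖u - w‖ ^ 2 / (4 * a)) - rexp (-‖u + w‖ ^ 2 / (4 * a))) / 2 := by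
  have hpt : ∀ t : EuclideanSpace ℝ (Fin d), Real.sin ⟪t, u⟫ * Real.sin ⟪t, w⟫ * rexp (-a * ‖t‖ ^ 2)
      = (Real.cos ⟪u - w, t⟫ * rexp (-a * ‖t‖ ^ 2)
          - Real.cos ⟪u + w, t⟫ * rexp (-a * ‖t‖ ^ 2)) / 2 := by
    intro t
    have h1 : ⟪u - w, t⟫ = ⟪t, u⟫ - ⟪t, w⟫ := by
      rw [inner_sub_left, real_inner_comm u t, real_inner_comm w t]
    have h2 : ⟪u + w, t⟫ = ⟪t, u⟫ + ⟪t, w⟫ := by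
      rw [inner_add_left, real_inner_comm u t, real_inner_comm w t]
    rw [h1, h2, Real.cos_sub, Real.cos_add]; ring
  rw [integral_congr_ae (Filter.Eventually.of_forall hpt), integral_div,
    integral_sub (integrable_cos_gauss ha _) (integrable_cos_gauss ha _),
    cos_gauss ha, cos_gauss ha]
  ring

/-- Translated Gaussian bump. -/
noncomputable def G (a : ℝ) {d : ℕ} (u x : EuclideanSpace ℝ (Fin d)) : ℝ :=
  rexp (-‖x - u‖ ^ 2 / (2 * a))

lemma gauss_shift (ha : 0 < a) (u v : E) :
    ∀ x : EuclideanSpace ℝ (Fin d), G a u x * G a v x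
      = rexp (-(1 / a) * ‖x - (1 / 2 : ℝ) • (u + v)‖ ^ 2) * rexp (-‖u - v‖ ^ 2 / (4 * a)) := by
  intro x
  simp only [G]
  rw [← Real.exp_add, ← Real.exp_add]
  congr 1
  have key : ‖x - u‖ ^ 2 + ‖x - v‖ ^ 2
      = 2 * ‖x - (1 / 2 : ℝ) • (u + v)‖ ^ 2 + ‖u - v‖ ^ 2 / 2 := by
    simp only [← real_inner_self_eq_norm_sq, inner_sub_left, inner_sub_right,
      inner_add_left, inner_add_right, real_inner_smul_left, real_inner_smul_right]
    have h1 := real_inner_comm x u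
    have h2 := real_inner_comm x v
    have h3 := real_inner_comm u v
    ring_nf
  have hcomb : -‖x - u‖ ^ 2 / (2 * a) + -‖x - v‖ ^ 2 / (2 * a)
      = -(‖x - u‖ ^ 2 + ‖x - v‖ ^ 2) / (2 * a) := by ring
  rw [hcomb, key]
  field_simp
  ring

lemma integrable_G_prod (ha : 0 < a) (u v : E) :
    Integrable (fun x : E => G a u x * G a v x) := by
  have := ((integrable_gauss (d := d) (by positivity : (0:ℝ) < 1 / a)).comp_sub_right
    ((1 / 2 : ℝ) • (u + v))).mul_const (rexp (-‖u - v‖ ^ 2 / (4 * a)))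
  exact this.congr (Filter.Eventually.of_forall fun x => (gauss_shift ha u v x).symm)

lemma G_prod_int (ha : 0 < a) (u v : E) :
    ∫ x : E, G a u x * G a v x
      = (π * a) ^ ((d : ℝ) / 2) * rexp (-‖u - v‖ ^ 2 / (4 * a)) := by
  rw [integral_congr_ae (Filter.Eventually.of_forall (gauss_shift ha u v)),
    integral_mul_const, integral_sub_right_eq_self
      (fun x : E => rexp (-(1 / a) * ‖x‖ ^ 2)) ((1 / 2 : ℝ) • (u + v)),
    GaussianFourier.integral_rexp_neg_mul_sq_norm (by positivity : (0:ℝ) < 1 / a)]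
  rw [finrank_euclideanSpace_fin, one_div, div_inv_eq_mul]

lemma integrable_cross (ha : 0 < a) (u w : E) :
    Integrable (fun x : E => (G a u x - G a (-u) x) * (G a w x - G a (-w) x)) := by
  have h12 : Integrable (fun x : E => G a u x * G a w x - G a u x * G a (-w) x) :=
    (integrable_G_prod ha u w).sub (integrable_G_prod ha u (-w))
  have h123 : Integrable (fun x : E =>
      G a u x * G a w x - G a u x * G a (-w) x - G a (-u) x * G a w x) :=
    h12.sub (integrable_G_prod ha (-u) w)
  have h : Integrable (fun x : E => G a u x * G a w x - G a u x * G a (-w) x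
      - G a (-u) x * G a w x + G a (-u) x * G a (-w) x) :=
    h123.add (integrable_G_prod ha (-u) (-w))
  exact h.congr (Filter.Eventually.of_forall fun x => by ring)

lemma cross_int (ha : 0 < a) (u w : E) :
    ∫ x : E, (G a u x - G a (-u) x) * (G a w x - G a (-w) x)
      = (π * a) ^ ((d : ℝ) / 2)
          * (2 * (rexp (-‖u - w‖ ^ 2 / (4 * a)) - rexp (-‖u + w‖ ^ 2 / (4 * a)))) := by
  have hpt : ∀ x : EuclideanSpace ℝ (Fin d), (G a u x - G a (-u) x) * (G a w x - G a (-w) x)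
      = G a u x * G a w x - G a u x * G a (-w) x
        - G a (-u) x * G a w x + G a (-u) x * G a (-w) x := fun x => by ring
  have h12 : Integrable (fun x : E => G a u x * G a w x - G a u x * G a (-w) x) :=
    (integrable_G_prod ha u w).sub (integrable_G_prod ha u (-w))
  have h123 : Integrable (fun x : E =>
      G a u x * G a w x - G a u x * G a (-w) x - G a (-u) x * G a w x) :=
    h12.sub (integrable_G_prod ha (-u) w)
  rw [integral_congr_ae (Filter.Eventually.of_forall hpt),
    integral_add (f := fun x : E =>
        G a u x * G a w x - G a u x * G a (-w) x - G a (-u) x * G a w x)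
      (g := fun x : E => G a (-u) x * G a (-w) x) h123 (integrable_G_prod ha (-u) (-w)),
    integral_sub (f := fun x : E => G a u x * G a w x - G a u x * G a (-w) x)
      (g := fun x : E => G a (-u) x * G a w x) h12 (integrable_G_prod ha (-u) w),
    integral_sub (f := fun x : E => G a u x * G a w x)
      (g := fun x : E => G a u x * G a (-w) x)
      (integrable_G_prod ha u w) (integrable_G_prod ha u (-w)),
    G_prod_int ha, G_prod_int ha, G_prod_int ha, G_prod_int ha]
  have e1 : ‖u - -w‖ = ‖u + w‖ := by rw [sub_neg_eq_add]
  have e2 : ‖-u - w‖ = ‖u + w‖ := by rw [show (-u - w : E) = -(u + w) by abel, norm_neg]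
  have e3 : ‖-u - -w‖ = ‖u - w‖ := by rw [show (-u - -w : E) = -(u - w) by abel, norm_neg]
  rw [e1, e2, e3]
  ring

lemma coeff_eq {n : ℕ} (hn : 0 < n) (ha : 0 < a) :
    (1 / (n : ℝ)) * ((π / a) ^ ((d : ℝ) / 2) / 2)
      = ((n : ℝ) * (2 * π) ^ d / 4) * ((1 / (n : ℝ)) ^ 2
          * ((2 * π * a) ^ (-(d : ℝ) / 2)) ^ 2 * ((π * a) ^ ((d : ℝ) / 2) * 2)) := by
  have hn' : (0 : ℝ) < n := by exact_mod_cast hn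
  have h2 : ((2 * π * a) ^ (-(d : ℝ) / 2)) ^ 2 = (2 * π * a) ^ (-(d : ℝ)) := by
    rw [← Real.rpow_natCast ((2 * π * a) ^ (-(d : ℝ) / 2)) 2,
      ← Real.rpow_mul (by positivity)]
    norm_num
  have h3 : ((2 * π) ^ d : ℝ) = (2 * π) ^ (d : ℝ) := (Real.rpow_natCast _ d).symm
  rw [h2, h3]
  have key : (π / a) ^ ((d : ℝ) / 2)
      = (2 * π) ^ (d : ℝ) * (2 * π * a) ^ (-(d : ℝ)) * (π * a) ^ ((d : ℝ) / 2) := by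
    rw [Real.rpow_def_of_pos (by positivity), Real.rpow_def_of_pos (by positivity),
      Real.rpow_def_of_pos (by positivity), Real.rpow_def_of_pos (by positivity),
      ← Real.exp_add, ← Real.exp_add]
    congr 1
    rw [Real.log_div pi_ne_zero (ne_of_gt ha),
      Real.log_mul (by positivity) (ne_of_gt ha),
      Real.log_mul (by positivity) pi_ne_zero,
      Real.log_mul pi_pos.ne' (ne_of_gt ha)]
    ring
  rw [key]
  field_simp
  ring

end helpers

theorem stmt4 (d n : ℕ) (hn : 0 < n) (y : Fin n → EuclideanSpace ℝ (Fin d))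
    (a : ℝ) (ha : 0 < a) (f : EuclideanSpace ℝ (Fin d) → ℝ)
    (hf : ∀ x, f x = (1 / n) * ∑ j, (2 * π * a) ^ (-(d : ℝ) / 2) *
      Real.exp (-‖x - y j‖ ^ 2 / (2 * a))) :
    ∫ t : EuclideanSpace ℝ (Fin d),
        ((1 / Real.sqrt n) * ∑ j, Real.sin ⟪t, y j⟫) ^ 2 * Real.exp (-a * ‖t‖ ^ 2)
      = (n * (2 * π) ^ d / 4) *
          ∫ x : EuclideanSpace ℝ (Fin d), (f x - f (-x)) ^ 2 := by
  have hc : True := trivial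
  -- LHS computation
  have hLpt : ∀ t : EuclideanSpace ℝ (Fin d), ((1 / Real.sqrt n) * ∑ j, Real.sin ⟪t, y j⟫) ^ 2 * rexp (-a * ‖t‖ ^ 2)
      = ∑ j, ∑ k, (1 / (n : ℝ))
          * (Real.sin ⟪t, y j⟫ * Real.sin ⟪t, y k⟫ * rexp (-a * ‖t‖ ^ 2)) := by
    intro t
    have hs : Real.sqrt n ^ 2 = n := Real.sq_sqrt (Nat.cast_nonneg n)
    rw [mul_pow, div_pow, one_pow, hs, sq, Finset.sum_mul_sum]
    simp only [Finset.sum_mul, Finset.mul_sum]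
    refine Finset.sum_congr rfl fun j _ => Finset.sum_congr rfl fun k _ => by ring
  have hL : (∫ t : EuclideanSpace ℝ (Fin d), ((1 / Real.sqrt n) * ∑ j, Real.sin ⟪t, y j⟫) ^ 2 * rexp (-a * ‖t‖ ^ 2))
      = ∑ j, ∑ k, (1 / (n : ℝ)) * ((π / a) ^ ((d : ℝ) / 2)
          * (rexp (-‖y j - y k‖ ^ 2 / (4 * a)) - rexp (-‖y j + y k‖ ^ 2 / (4 * a))) / 2) := by
    rw [integral_congr_ae (Filter.Eventually.of_forall hLpt),
      integral_finset_sum _ (fun j _ => integrable_finset_sum _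
        (fun k _ => (integrable_sinsin_gauss ha (y j) (y k)).const_mul _))]
    refine Finset.sum_congr rfl fun j _ => ?_
    rw [integral_finset_sum _ (fun k _ => (integrable_sinsin_gauss ha (y j) (y k)).const_mul _)]
    refine Finset.sum_congr rfl fun k _ => ?_
    rw [integral_const_mul, sinsin_gauss ha]
  -- RHS computation
  have hfd : ∀ x : EuclideanSpace ℝ (Fin d), f x - f (-x)
      = ∑ j, ((1 / (n : ℝ)) * (2 * π * a) ^ (-(d : ℝ) / 2)) * (G a (y j) x - G a (-(y j)) x) := by
    intro x
    rw [hf x, hf (-x), Finset.mul_sum, Finset.mul_sum, ← Finset.sum_sub_distrib]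
    refine Finset.sum_congr rfl fun j _ => ?_
    have hnorm : ‖-x - y j‖ = ‖x - -(y j)‖ := by
      rw [show (-x - y j : EuclideanSpace ℝ (Fin d)) = -(x - -(y j)) by abel, norm_neg]
    rw [G, G, hnorm]
    ring
  have hRpt : ∀ x : EuclideanSpace ℝ (Fin d), (f x - f (-x)) ^ 2
      = ∑ j, ∑ k, ((1 / (n : ℝ)) * (2 * π * a) ^ (-(d : ℝ) / 2)) ^ 2
          * ((G a (y j) x - G a (-(y j)) x) * (G a (y k) x - G a (-(y k)) x)) := by
    intro x
    rw [hfd x, sq, Finset.sum_mul_sum]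
    refine Finset.sum_congr rfl fun j _ => Finset.sum_congr rfl fun k _ => by ring
  have hR : (∫ x : EuclideanSpace ℝ (Fin d), (f x - f (-x)) ^ 2)
      = ∑ j, ∑ k, ((1 / (n : ℝ)) * (2 * π * a) ^ (-(d : ℝ) / 2)) ^ 2 * ((π * a) ^ ((d : ℝ) / 2)
          * (2 * (rexp (-‖y j - y k‖ ^ 2 / (4 * a)) - rexp (-‖y j + y k‖ ^ 2 / (4 * a))))) := by
    rw [integral_congr_ae (Filter.Eventually.of_forall hRpt),
      integral_finset_sum _ (fun j _ => integrable_finset_sum _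
        (fun k _ => (integrable_cross ha (y j) (y k)).const_mul _))]
    refine Finset.sum_congr rfl fun j _ => ?_
    rw [integral_finset_sum _ (fun k _ => (integrable_cross ha (y j) (y k)).const_mul _)]
    refine Finset.sum_congr rfl fun k _ => ?_
    rw [integral_const_mul, cross_int ha]
  rw [hL, hR, Finset.mul_sum]
  refine Finset.sum_congr rfl fun j _ => ?_
  rw [Finset.mul_sum]
  refine Finset.sum_congr rfl fun k _ => ?_
  have hco := coeff_eq (d := d) (a := a) hn ha
  set T := rexp (-‖y j - y k‖ ^ 2 / (4 * a)) - rexp (-‖y j + y k‖ ^ 2 / (4 * a)) with hT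
  linear_combination T * hco
end

section
/- Let X be a random vector in ℝ^d with characteristic-function imaginary part I(t) = E[sin(tᵀX)], and let a > 0. Then ∫_{ℝ^d} I(t)² exp(-a‖t‖²) dt = (1/(4a^d)) ∫_{ℝ^d} ( E[ exp(-‖x - X‖²/(2a)) - exp(-‖x + X‖²/(2a)) ] )² dx. -/
open MeasureTheory Real
open scoped RealInnerProductSpace

lemma real_gauss_int (d : ℕ) (b : ℝ) (hb : 0 < b) (c : ℝ) (w : EuclideanSpace ℝ (Fin d)) :
    ∫ x : EuclideanSpace ℝ (Fin d), rexp (-b * ‖x‖ ^ 2 + c * ⟪w, x⟫)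
      = (π / b) ^ ((d : ℝ) / 2) * rexp (c ^ 2 * ‖w‖ ^ 2 / (4 * b)) := by
  have h := GaussianFourier.integral_cexp_neg_mul_sq_norm_add
      (V := EuclideanSpace ℝ (Fin d)) (b := (b : ℂ)) (by simpa using hb) (c : ℂ) w
  rw [finrank_euclideanSpace_fin] at h
  have h2 : ((∫ x : EuclideanSpace ℝ (Fin d), rexp (-b * ‖x‖ ^ 2 + c * ⟪w, x⟫) : ℝ) : ℂ)
      = ∫ x : EuclideanSpace ℝ (Fin d), Complex.exp (-(b:ℂ) * ‖x‖ ^ 2 + (c:ℂ) * ⟪w, x⟫) := by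
    change Complex.ofRealLI _ = _
    rw [← Complex.ofRealLI.integral_comp_comm]
    congr 1; funext x
    show ((rexp (-b * ‖x‖ ^ 2 + c * ⟪w, x⟫) : ℝ) : ℂ) = _
    rw [Complex.ofReal_exp]
    congr 1
    push_cast
    ring
  rw [← Complex.ofReal_inj, h2, h]
  rw [Complex.ofReal_mul, Complex.ofReal_exp]
  congr 1
  · rw [Complex.ofReal_cpow (by positivity)]
    push_cast; ring
  · push_cast; ring

lemma real_gauss_integrable (d : ℕ) {b : ℝ} (hb : 0 < b) (c : ℝ) (w : EuclideanSpace ℝ (Fin d)) :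
    Integrable (fun x : EuclideanSpace ℝ (Fin d) => rexp (-b * ‖x‖ ^ 2 + c * ⟪w, x⟫)) := by
  have h := (GaussianFourier.integrable_cexp_neg_mul_sq_norm_add
      (V := EuclideanSpace ℝ (Fin d)) (b := (b : ℂ)) (by simpa using hb) (c : ℂ) w).re
  simp only [RCLike.re_eq_complex_re] at h
  refine h.congr (Filter.Eventually.of_forall fun x => ?_)
  show (Complex.exp (-(b:ℂ) * ‖x‖ ^ 2 + (c:ℂ) * ⟪w, x⟫)).re = rexp (-b * ‖x‖ ^ 2 + c * ⟪w, x⟫)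
  rw [show (-(b:ℂ) * ‖x‖ ^ 2 + (c:ℂ) * ⟪w, x⟫) = ((-b * ‖x‖ ^ 2 + c * ⟪w, x⟫ : ℝ) : ℂ) by
    push_cast; ring]
  exact Complex.exp_ofReal_re _

lemma gauss_integrable (d : ℕ) {b : ℝ} (hb : 0 < b) :
    Integrable (fun x : EuclideanSpace ℝ (Fin d) => rexp (-b * ‖x‖ ^ 2)) := by
  have h := real_gauss_integrable d hb 0 (0 : EuclideanSpace ℝ (Fin d))
  simpa using h

lemma cexp_gauss_re (d : ℕ) (a : ℝ) (v t : EuclideanSpace ℝ (Fin d)) :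
    (Complex.exp (-(a:ℂ) * ‖t‖ ^ 2 + Complex.I * ⟪v, t⟫)).re
      = Real.cos ⟪v, t⟫ * rexp (-a * ‖t‖ ^ 2) := by
  rw [show (-(a:ℂ) * ‖t‖ ^ 2 + Complex.I * ⟪v, t⟫)
      = Complex.ofReal (-a * ‖t‖ ^ 2) + Complex.ofReal ⟪v, t⟫ * Complex.I by push_cast; ring]
  rw [Complex.exp_re]
  simp only [Complex.add_re, Complex.ofReal_re, Complex.mul_re, Complex.I_re, Complex.I_im,
    Complex.ofReal_im, Complex.add_im, Complex.mul_im]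
  norm_num
  ring

lemma cos_gauss_integrable (d : ℕ) {a : ℝ} (ha : 0 < a) (v : EuclideanSpace ℝ (Fin d)) :
    Integrable (fun t : EuclideanSpace ℝ (Fin d) => Real.cos ⟪v, t⟫ * rexp (-a * ‖t‖ ^ 2)) := by
  have h := (GaussianFourier.integrable_cexp_neg_mul_sq_norm_add
      (V := EuclideanSpace ℝ (Fin d)) (b := (a : ℂ)) (by simpa using ha) Complex.I v).re
  simp only [RCLike.re_eq_complex_re] at h
  refine h.congr (Filter.Eventually.of_forall fun t => ?_)
  exact cexp_gauss_re d a v t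

lemma cos_gauss_int (d : ℕ) {a : ℝ} (ha : 0 < a) (v : EuclideanSpace ℝ (Fin d)) :
    ∫ t : EuclideanSpace ℝ (Fin d), Real.cos ⟪v, t⟫ * rexp (-a * ‖t‖ ^ 2)
      = (π / a) ^ ((d : ℝ) / 2) * rexp (-‖v‖ ^ 2 / (4 * a)) := by
  have h := GaussianFourier.integral_cexp_neg_mul_sq_norm_add
      (V := EuclideanSpace ℝ (Fin d)) (b := (a : ℂ)) (by simpa using ha) Complex.I v
  rw [finrank_euclideanSpace_fin] at h
  have hint := GaussianFourier.integrable_cexp_neg_mul_sq_norm_add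
      (V := EuclideanSpace ℝ (Fin d)) (b := (a : ℂ)) (by simpa using ha) Complex.I v
  have h3 : ∫ t : EuclideanSpace ℝ (Fin d), Real.cos ⟪v, t⟫ * rexp (-a * ‖t‖ ^ 2)
      = (∫ t : EuclideanSpace ℝ (Fin d),
          Complex.exp (-(a:ℂ) * ‖t‖ ^ 2 + Complex.I * ⟪v, t⟫)).re := by
    have h5 := integral_re hint
    simp only [RCLike.re_eq_complex_re] at h5
    rw [← h5]
    congr 1; funext t
    exact (cexp_gauss_re d a v t).symm
  rw [h3, h]
  have h4 : ((π:ℂ) / a) ^ ((d:ℂ) / 2) * Complex.exp (Complex.I ^ 2 * ‖v‖ ^ 2 / (4 * a))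
      = (((π / a) ^ ((d : ℝ) / 2) * rexp (-‖v‖ ^ 2 / (4 * a)) : ℝ) : ℂ) := by
    rw [Complex.ofReal_mul, Complex.ofReal_exp, Complex.ofReal_cpow (by positivity)]
    rw [Complex.I_sq]
    congr 1
    · push_cast; ring
    · congr 1; push_cast; ring
  rw [h4, Complex.ofReal_re]

lemma K1 (d : ℕ) {a : ℝ} (ha : 0 < a) (u v : EuclideanSpace ℝ (Fin d)) :
    ∫ t : EuclideanSpace ℝ (Fin d), Real.sin ⟪t, u⟫ * Real.sin ⟪t, v⟫ * rexp (-a * ‖t‖ ^ 2)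
      = (π / a) ^ ((d : ℝ) / 2) / 2 *
        (rexp (-‖u - v‖ ^ 2 / (4 * a)) - rexp (-‖u + v‖ ^ 2 / (4 * a))) := by
  have hpt : ∀ t : EuclideanSpace ℝ (Fin d),
      Real.sin ⟪t, u⟫ * Real.sin ⟪t, v⟫ * rexp (-a * ‖t‖ ^ 2)
        = (Real.cos ⟪u - v, t⟫ * rexp (-a * ‖t‖ ^ 2)
            - Real.cos ⟪u + v, t⟫ * rexp (-a * ‖t‖ ^ 2)) / 2 := by
    intro t
    have h1 : ⟪u - v, t⟫ = ⟪t, u⟫ - ⟪t, v⟫ := by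
      rw [inner_sub_left, real_inner_comm u t, real_inner_comm v t]
    have h2 : ⟪u + v, t⟫ = ⟪t, u⟫ + ⟪t, v⟫ := by
      rw [inner_add_left, real_inner_comm u t, real_inner_comm v t]
    rw [h1, h2, Real.cos_sub, Real.cos_add]
    ring
  simp only [hpt]
  rw [integral_div, integral_sub (cos_gauss_integrable d ha (u - v))
    (cos_gauss_integrable d ha (u + v)), cos_gauss_int d ha (u - v), cos_gauss_int d ha (u + v)]
  ring

lemma gaussprod_pt (d : ℕ) {a : ℝ} (ha : 0 < a) (u v x : EuclideanSpace ℝ (Fin d)) :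
    rexp (-‖x - u‖ ^ 2 / (2 * a)) * rexp (-‖x - v‖ ^ 2 / (2 * a))
      = rexp (-(‖u‖ ^ 2 + ‖v‖ ^ 2) / (2 * a)) *
          rexp (-(1 / a) * ‖x‖ ^ 2 + (1 / a) * ⟪u + v, x⟫) := by
  rw [← Real.exp_add, ← Real.exp_add]
  congr 1
  rw [norm_sub_sq_real x u, norm_sub_sq_real x v, inner_add_left,
    real_inner_comm u x, real_inner_comm v x]
  field_simp
  ring

lemma gaussprod_integrable (d : ℕ) {a : ℝ} (ha : 0 < a) (u v : EuclideanSpace ℝ (Fin d)) :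
    Integrable (fun x : EuclideanSpace ℝ (Fin d) =>
      rexp (-‖x - u‖ ^ 2 / (2 * a)) * rexp (-‖x - v‖ ^ 2 / (2 * a))) := by
  have h := ((real_gauss_integrable d (b := 1/a) (by positivity) (1/a) (u + v)).const_mul
    (rexp (-(‖u‖ ^ 2 + ‖v‖ ^ 2) / (2 * a))))
  exact h.congr (Filter.Eventually.of_forall fun x => (gaussprod_pt d ha u v x).symm)

lemma gaussprod (d : ℕ) {a : ℝ} (ha : 0 < a) (u v : EuclideanSpace ℝ (Fin d)) :
    ∫ x : EuclideanSpace ℝ (Fin d),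
        rexp (-‖x - u‖ ^ 2 / (2 * a)) * rexp (-‖x - v‖ ^ 2 / (2 * a))
      = (π * a) ^ ((d : ℝ) / 2) * rexp (-‖u - v‖ ^ 2 / (4 * a)) := by
  simp only [gaussprod_pt d ha u v]
  rw [integral_const_mul, real_gauss_int d (1/a) (by positivity) (1/a) (u + v)]
  rw [show π / (1/a) = π * a by field_simp]
  rw [← mul_assoc, mul_comm (rexp _), mul_assoc, ← Real.exp_add]
  congr 2
  rw [norm_add_sq_real u v, norm_sub_sq_real u v]
  field_simp
  ring

lemma K2_integrable (d : ℕ) {a : ℝ} (ha : 0 < a) (u v : EuclideanSpace ℝ (Fin d)) :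
    Integrable (fun x : EuclideanSpace ℝ (Fin d) =>
      (rexp (-‖x - u‖ ^ 2 / (2 * a)) - rexp (-‖x + u‖ ^ 2 / (2 * a))) *
        (rexp (-‖x - v‖ ^ 2 / (2 * a)) - rexp (-‖x + v‖ ^ 2 / (2 * a)))) := by
  simp only [show ∀ x w : EuclideanSpace ℝ (Fin d), x + w = x - -w from fun x w => by
    rw [sub_neg_eq_add], sub_mul, mul_sub]
  exact (((gaussprod_integrable d ha u v).sub (gaussprod_integrable d ha (-u) v)).sub
    ((gaussprod_integrable d ha u (-v)).sub (gaussprod_integrable d ha (-u) (-v))))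

lemma K2 (d : ℕ) {a : ℝ} (ha : 0 < a) (u v : EuclideanSpace ℝ (Fin d)) :
    ∫ x : EuclideanSpace ℝ (Fin d),
        (rexp (-‖x - u‖ ^ 2 / (2 * a)) - rexp (-‖x + u‖ ^ 2 / (2 * a))) *
          (rexp (-‖x - v‖ ^ 2 / (2 * a)) - rexp (-‖x + v‖ ^ 2 / (2 * a)))
      = 2 * (π * a) ^ ((d : ℝ) / 2) *
          (rexp (-‖u - v‖ ^ 2 / (4 * a)) - rexp (-‖u + v‖ ^ 2 / (4 * a))) := by
  simp only [show ∀ x w : EuclideanSpace ℝ (Fin d), x + w = x - -w from fun x w => by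
    rw [sub_neg_eq_add], sub_mul, mul_sub]
  have hI1 : Integrable (fun x : EuclideanSpace ℝ (Fin d) =>
      rexp (-‖x - u‖ ^ 2 / (2 * a)) * rexp (-‖x - v‖ ^ 2 / (2 * a))
        - rexp (-‖x - -u‖ ^ 2 / (2 * a)) * rexp (-‖x - v‖ ^ 2 / (2 * a))) :=
    (gaussprod_integrable d ha u v).sub (gaussprod_integrable d ha (-u) v)
  have hI2 : Integrable (fun x : EuclideanSpace ℝ (Fin d) =>
      rexp (-‖x - u‖ ^ 2 / (2 * a)) * rexp (-‖x - -v‖ ^ 2 / (2 * a))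
        - rexp (-‖x - -u‖ ^ 2 / (2 * a)) * rexp (-‖x - -v‖ ^ 2 / (2 * a))) :=
    (gaussprod_integrable d ha u (-v)).sub (gaussprod_integrable d ha (-u) (-v))
  rw [integral_sub hI1 hI2,
    integral_sub (gaussprod_integrable d ha u v) (gaussprod_integrable d ha (-u) v),
    integral_sub (gaussprod_integrable d ha u (-v)) (gaussprod_integrable d ha (-u) (-v)),
    gaussprod d ha u v, gaussprod d ha u (-v), gaussprod d ha (-u) v, gaussprod d ha (-u) (-v)]
  rw [show u - -v = u + v by rw [sub_neg_eq_add],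
    show (-u : EuclideanSpace ℝ (Fin d)) - v = -(u + v) by abel,
    show (-u : EuclideanSpace ℝ (Fin d)) - -v = -(u - v) by abel,
    norm_neg, norm_neg]
  ring

lemma K2bound (d : ℕ) {a : ℝ} (ha : 0 < a) (u v : EuclideanSpace ℝ (Fin d)) :
    ∫ x : EuclideanSpace ℝ (Fin d),
        ‖(rexp (-‖x - u‖ ^ 2 / (2 * a)) - rexp (-‖x + u‖ ^ 2 / (2 * a))) *
          (rexp (-‖x - v‖ ^ 2 / (2 * a)) - rexp (-‖x + v‖ ^ 2 / (2 * a)))‖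
      ≤ 4 * (π * a) ^ ((d : ℝ) / 2) := by
  have hplus : ∫ x : EuclideanSpace ℝ (Fin d),
      (rexp (-‖x - u‖ ^ 2 / (2 * a)) + rexp (-‖x + u‖ ^ 2 / (2 * a))) *
        (rexp (-‖x - v‖ ^ 2 / (2 * a)) + rexp (-‖x + v‖ ^ 2 / (2 * a)))
      = 2 * (π * a) ^ ((d : ℝ) / 2) *
          (rexp (-‖u - v‖ ^ 2 / (4 * a)) + rexp (-‖u + v‖ ^ 2 / (4 * a))) := by
    simp only [show ∀ x w : EuclideanSpace ℝ (Fin d), x + w = x - -w from fun x w => by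
      rw [sub_neg_eq_add], add_mul, mul_add]
    have hI1 : Integrable (fun x : EuclideanSpace ℝ (Fin d) =>
        rexp (-‖x - u‖ ^ 2 / (2 * a)) * rexp (-‖x - v‖ ^ 2 / (2 * a))
          + rexp (-‖x - -u‖ ^ 2 / (2 * a)) * rexp (-‖x - v‖ ^ 2 / (2 * a))) :=
      (gaussprod_integrable d ha u v).add (gaussprod_integrable d ha (-u) v)
    have hI2 : Integrable (fun x : EuclideanSpace ℝ (Fin d) =>
        rexp (-‖x - u‖ ^ 2 / (2 * a)) * rexp (-‖x - -v‖ ^ 2 / (2 * a))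
          + rexp (-‖x - -u‖ ^ 2 / (2 * a)) * rexp (-‖x - -v‖ ^ 2 / (2 * a))) :=
      (gaussprod_integrable d ha u (-v)).add (gaussprod_integrable d ha (-u) (-v))
    rw [integral_add hI1 hI2,
      integral_add (gaussprod_integrable d ha u v) (gaussprod_integrable d ha (-u) v),
      integral_add (gaussprod_integrable d ha u (-v)) (gaussprod_integrable d ha (-u) (-v)),
      gaussprod d ha u v, gaussprod d ha u (-v), gaussprod d ha (-u) v, gaussprod d ha (-u) (-v)]
    rw [show u - -v = u + v by rw [sub_neg_eq_add],
      show (-u : EuclideanSpace ℝ (Fin d)) - v = -(u + v) by abel,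
      show (-u : EuclideanSpace ℝ (Fin d)) - -v = -(u - v) by abel,
      norm_neg, norm_neg]
    ring
  have hplus_int : Integrable (fun x : EuclideanSpace ℝ (Fin d) =>
      (rexp (-‖x - u‖ ^ 2 / (2 * a)) + rexp (-‖x + u‖ ^ 2 / (2 * a))) *
        (rexp (-‖x - v‖ ^ 2 / (2 * a)) + rexp (-‖x + v‖ ^ 2 / (2 * a)))) := by
    simp only [show ∀ x w : EuclideanSpace ℝ (Fin d), x + w = x - -w from fun x w => by
      rw [sub_neg_eq_add], add_mul, mul_add]
    exact (((gaussprod_integrable d ha u v).add (gaussprod_integrable d ha (-u) v)).add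
      ((gaussprod_integrable d ha u (-v)).add (gaussprod_integrable d ha (-u) (-v))))
  have hmono : ∫ x : EuclideanSpace ℝ (Fin d),
      ‖(rexp (-‖x - u‖ ^ 2 / (2 * a)) - rexp (-‖x + u‖ ^ 2 / (2 * a))) *
        (rexp (-‖x - v‖ ^ 2 / (2 * a)) - rexp (-‖x + v‖ ^ 2 / (2 * a)))‖
      ≤ ∫ x : EuclideanSpace ℝ (Fin d),
        (rexp (-‖x - u‖ ^ 2 / (2 * a)) + rexp (-‖x + u‖ ^ 2 / (2 * a))) *
          (rexp (-‖x - v‖ ^ 2 / (2 * a)) + rexp (-‖x + v‖ ^ 2 / (2 * a))) := by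
    refine integral_mono (K2_integrable d ha u v).norm hplus_int fun x => ?_
    rw [norm_mul, Real.norm_eq_abs, Real.norm_eq_abs]
    have hb1 : |rexp (-‖x - u‖ ^ 2 / (2 * a)) - rexp (-‖x + u‖ ^ 2 / (2 * a))|
        ≤ rexp (-‖x - u‖ ^ 2 / (2 * a)) + rexp (-‖x + u‖ ^ 2 / (2 * a)) := by
      refine (abs_sub _ _).trans ?_
      rw [abs_of_nonneg (Real.exp_nonneg _), abs_of_nonneg (Real.exp_nonneg _)]
    have hb2 : |rexp (-‖x - v‖ ^ 2 / (2 * a)) - rexp (-‖x + v‖ ^ 2 / (2 * a))|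
        ≤ rexp (-‖x - v‖ ^ 2 / (2 * a)) + rexp (-‖x + v‖ ^ 2 / (2 * a)) := by
      refine (abs_sub _ _).trans ?_
      rw [abs_of_nonneg (Real.exp_nonneg _), abs_of_nonneg (Real.exp_nonneg _)]
    have h0 : (0:ℝ) ≤ |rexp (-‖x - u‖ ^ 2 / (2 * a)) - rexp (-‖x + u‖ ^ 2 / (2 * a))| :=
      abs_nonneg _
    nlinarith [abs_nonneg (rexp (-‖x - v‖ ^ 2 / (2 * a)) - rexp (-‖x + v‖ ^ 2 / (2 * a))),
      Real.exp_nonneg (-‖x - u‖ ^ 2 / (2 * a)), Real.exp_nonneg (-‖x + u‖ ^ 2 / (2 * a))]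
  refine hmono.trans ?_
  rw [hplus]
  have hC : (0:ℝ) ≤ (π * a) ^ ((d : ℝ) / 2) := Real.rpow_nonneg (by positivity) _
  have he1 : rexp (-‖u - v‖ ^ 2 / (4 * a)) ≤ 1 := by
    rw [Real.exp_le_one_iff]
    have : (0:ℝ) ≤ ‖u - v‖ ^ 2 / (4 * a) := by positivity
    linarith [this, neg_div (4*a) (‖u - v‖^2)]
  have he2 : rexp (-‖u + v‖ ^ 2 / (4 * a)) ≤ 1 := by
    rw [Real.exp_le_one_iff]
    have : (0:ℝ) ≤ ‖u + v‖ ^ 2 / (4 * a) := by positivity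
    linarith [this, neg_div (4*a) (‖u + v‖^2)]
  nlinarith [Real.exp_nonneg (-‖u - v‖ ^ 2 / (4 * a)), Real.exp_nonneg (-‖u + v‖ ^ 2 / (4 * a))]

theorem stmt5 (d : ℕ) {Ω : Type*} [MeasurableSpace Ω] (ℙ : Measure Ω)
    [IsProbabilityMeasure ℙ] (X : Ω → EuclideanSpace ℝ (Fin d)) (hX : Measurable X)
    (a : ℝ) (ha : 0 < a) :
    ∫ t : EuclideanSpace ℝ (Fin d),
        (∫ ω, Real.sin ⟪t, X ω⟫ ∂ℙ) ^ 2 * Real.exp (-a * ‖t‖ ^ 2)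
      = (1 / (4 * a ^ d)) *
          ∫ x : EuclideanSpace ℝ (Fin d),
            (∫ ω, (Real.exp (-‖x - X ω‖ ^ 2 / (2 * a))
              - Real.exp (-‖x + X ω‖ ^ 2 / (2 * a))) ∂ℙ) ^ 2 := by
  have hX1 : Measurable fun p : Ω × Ω => X p.1 := hX.comp measurable_fst
  have hX2 : Measurable fun p : Ω × Ω => X p.2 := hX.comp measurable_snd
  -- measurability of LHS joint integrand
  have hM1 : Measurable fun z : EuclideanSpace ℝ (Fin d) × Ω × Ω =>
      Real.sin ⟪z.1, X z.2.1⟫ * Real.sin ⟪z.1, X z.2.2⟫ * rexp (-a * ‖z.1‖ ^ 2) := by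
    have hi1 : Measurable fun z : EuclideanSpace ℝ (Fin d) × Ω × Ω => (⟪z.1, X z.2.1⟫ : ℝ) :=
      measurable_fst.inner (hX1.comp measurable_snd)
    have hi2 : Measurable fun z : EuclideanSpace ℝ (Fin d) × Ω × Ω => (⟪z.1, X z.2.2⟫ : ℝ) :=
      measurable_fst.inner (hX2.comp measurable_snd)
    have he : Measurable fun z : EuclideanSpace ℝ (Fin d) × Ω × Ω => rexp (-a * ‖z.1‖ ^ 2) :=
      ((measurable_fst.norm.pow_const 2).const_mul (-a)).exp
    exact ((Real.measurable_sin.comp hi1).mul (Real.measurable_sin.comp hi2)).mul he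
  -- measurability of RHS joint integrand
  have hM2 : Measurable fun z : EuclideanSpace ℝ (Fin d) × Ω × Ω =>
      (rexp (-‖z.1 - X z.2.1‖ ^ 2 / (2 * a)) - rexp (-‖z.1 + X z.2.1‖ ^ 2 / (2 * a))) *
        (rexp (-‖z.1 - X z.2.2‖ ^ 2 / (2 * a)) - rexp (-‖z.1 + X z.2.2‖ ^ 2 / (2 * a))) := by
    have h1 : Measurable fun z : EuclideanSpace ℝ (Fin d) × Ω × Ω =>
        rexp (-‖z.1 - X z.2.1‖ ^ 2 / (2 * a)) :=
      ((((measurable_fst.sub (hX1.comp measurable_snd)).norm.pow_const 2).neg).div_const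
        (2 * a)).exp
    have h2 : Measurable fun z : EuclideanSpace ℝ (Fin d) × Ω × Ω =>
        rexp (-‖z.1 + X z.2.1‖ ^ 2 / (2 * a)) :=
      ((((measurable_fst.add (hX1.comp measurable_snd)).norm.pow_const 2).neg).div_const
        (2 * a)).exp
    have h3 : Measurable fun z : EuclideanSpace ℝ (Fin d) × Ω × Ω =>
        rexp (-‖z.1 - X z.2.2‖ ^ 2 / (2 * a)) :=
      ((((measurable_fst.sub (hX2.comp measurable_snd)).norm.pow_const 2).neg).div_const
        (2 * a)).exp
    have h4 : Measurable fun z : EuclideanSpace ℝ (Fin d) × Ω × Ω =>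
        rexp (-‖z.1 + X z.2.2‖ ^ 2 / (2 * a)) :=
      ((((measurable_fst.add (hX2.comp measurable_snd)).norm.pow_const 2).neg).div_const
        (2 * a)).exp
    exact (h1.sub h2).mul (h3.sub h4)
  -- Fubini for LHS
  have hfixt : ∀ t : EuclideanSpace ℝ (Fin d), Integrable
      (fun p : Ω × Ω => Real.sin ⟪t, X p.1⟫ * Real.sin ⟪t, X p.2⟫ * rexp (-a * ‖t‖ ^ 2)) (ℙ.prod ℙ) := by
    intro t
    have hmeas : Measurable
        (fun p : Ω × Ω => Real.sin ⟪t, X p.1⟫ * Real.sin ⟪t, X p.2⟫ * rexp (-a * ‖t‖ ^ 2)) :=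
      ((Real.measurable_sin.comp (measurable_const.inner hX1)).mul
        (Real.measurable_sin.comp (measurable_const.inner hX2))).mul measurable_const
    refine Integrable.mono' (integrable_const (rexp (-a * ‖t‖ ^ 2)))
      hmeas.aestronglyMeasurable (Filter.Eventually.of_forall fun p => ?_)
    rw [norm_mul, norm_mul, Real.norm_eq_abs, Real.norm_eq_abs, Real.norm_eq_abs,
      abs_of_nonneg (Real.exp_nonneg _)]
    have h1 : |Real.sin ⟪t, X p.1⟫| ≤ 1 := abs_le.mpr ⟨neg_one_le_sin _, sin_le_one _⟩
    have h2 : |Real.sin ⟪t, X p.2⟫| ≤ 1 := abs_le.mpr ⟨neg_one_le_sin _, sin_le_one _⟩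
    exact mul_le_of_le_one_left (Real.exp_nonneg _) (mul_le_one₀ h1 (abs_nonneg _) h2)
  have hFub1 : Integrable (Function.uncurry fun (t : EuclideanSpace ℝ (Fin d)) (p : Ω × Ω) =>
      Real.sin ⟪t, X p.1⟫ * Real.sin ⟪t, X p.2⟫ * rexp (-a * ‖t‖ ^ 2))
      ((volume : Measure (EuclideanSpace ℝ (Fin d))).prod (ℙ.prod ℙ)) := by
    refine (integrable_prod_iff hM1.aestronglyMeasurable).mpr ⟨?_, ?_⟩
    · exact Filter.Eventually.of_forall fun t => hfixt t
    · refine Integrable.mono' (gauss_integrable d ha)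
        (hM1.aestronglyMeasurable.norm.integral_prod_right')
        (Filter.Eventually.of_forall fun t => ?_)
      rw [Real.norm_eq_abs, abs_of_nonneg (integral_nonneg fun p => norm_nonneg _)]
      calc ∫ p, ‖Real.sin ⟪t, X p.1⟫ * Real.sin ⟪t, X p.2⟫ * rexp (-a * ‖t‖ ^ 2)‖ ∂(ℙ.prod ℙ)
          ≤ ∫ _ : Ω × Ω, rexp (-a * ‖t‖ ^ 2) ∂(ℙ.prod ℙ) := by
            refine integral_mono (hfixt t).norm (integrable_const _) fun p => ?_
            rw [norm_mul, norm_mul, Real.norm_eq_abs, Real.norm_eq_abs, Real.norm_eq_abs,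
              abs_of_nonneg (Real.exp_nonneg _)]
            have h1 : |Real.sin ⟪t, X p.1⟫| ≤ 1 := abs_le.mpr ⟨neg_one_le_sin _, sin_le_one _⟩
            have h2 : |Real.sin ⟪t, X p.2⟫| ≤ 1 := abs_le.mpr ⟨neg_one_le_sin _, sin_le_one _⟩
            exact mul_le_of_le_one_left (Real.exp_nonneg _) (mul_le_one₀ h1 (abs_nonneg _) h2)
        _ = rexp (-a * ‖t‖ ^ 2) := by simp
  -- Fubini for RHS
  have hFub2 : Integrable (Function.uncurry fun (x : EuclideanSpace ℝ (Fin d)) (p : Ω × Ω) =>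
      (rexp (-‖x - X p.1‖ ^ 2 / (2 * a)) - rexp (-‖x + X p.1‖ ^ 2 / (2 * a))) *
        (rexp (-‖x - X p.2‖ ^ 2 / (2 * a)) - rexp (-‖x + X p.2‖ ^ 2 / (2 * a))))
      ((volume : Measure (EuclideanSpace ℝ (Fin d))).prod (ℙ.prod ℙ)) := by
    refine (integrable_prod_iff' hM2.aestronglyMeasurable).mpr ⟨?_, ?_⟩
    · exact Filter.Eventually.of_forall fun p => K2_integrable d ha (X p.1) (X p.2)
    · refine Integrable.mono' (integrable_const (4 * (π * a) ^ ((d : ℝ) / 2)))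
        (hM2.aestronglyMeasurable.norm.prod_swap.integral_prod_right')
        (Filter.Eventually.of_forall fun p => ?_)
      rw [Real.norm_eq_abs, abs_of_nonneg (integral_nonneg fun x => norm_nonneg _)]
      exact K2bound d ha (X p.1) (X p.2)
  -- main computation
  have hL1 : ∀ t : EuclideanSpace ℝ (Fin d), (∫ ω, Real.sin ⟪t, X ω⟫ ∂ℙ) ^ 2 * rexp (-a * ‖t‖ ^ 2)
      = ∫ p, Real.sin ⟪t, X p.1⟫ * Real.sin ⟪t, X p.2⟫ * rexp (-a * ‖t‖ ^ 2) ∂(ℙ.prod ℙ) := by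
    intro t
    rw [sq, ← integral_prod_mul, ← integral_mul_const]
  have hR1 : ∀ x : EuclideanSpace ℝ (Fin d), (∫ ω, (rexp (-‖x - X ω‖ ^ 2 / (2 * a))
        - rexp (-‖x + X ω‖ ^ 2 / (2 * a))) ∂ℙ) ^ 2
      = ∫ p, (rexp (-‖x - X p.1‖ ^ 2 / (2 * a)) - rexp (-‖x + X p.1‖ ^ 2 / (2 * a))) *
          (rexp (-‖x - X p.2‖ ^ 2 / (2 * a)) - rexp (-‖x + X p.2‖ ^ 2 / (2 * a))) ∂(ℙ.prod ℙ) := by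
    intro x
    rw [sq, ← integral_prod_mul]
  simp only [hL1, hR1]
  rw [MeasureTheory.integral_integral_swap hFub1, MeasureTheory.integral_integral_swap hFub2]
  have hL2 : ∀ p : Ω × Ω,
      ∫ t : EuclideanSpace ℝ (Fin d), Real.sin ⟪t, X p.1⟫ * Real.sin ⟪t, X p.2⟫ * rexp (-a * ‖t‖ ^ 2)
        = (π / a) ^ ((d : ℝ) / 2) / 2 *
          (rexp (-‖X p.1 - X p.2‖ ^ 2 / (4 * a)) - rexp (-‖X p.1 + X p.2‖ ^ 2 / (4 * a))) :=
    fun p => K1 d ha (X p.1) (X p.2)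
  have hR2 : ∀ p : Ω × Ω,
      ∫ x : EuclideanSpace ℝ (Fin d), (rexp (-‖x - X p.1‖ ^ 2 / (2 * a)) - rexp (-‖x + X p.1‖ ^ 2 / (2 * a))) *
          (rexp (-‖x - X p.2‖ ^ 2 / (2 * a)) - rexp (-‖x + X p.2‖ ^ 2 / (2 * a)))
        = 2 * (π * a) ^ ((d : ℝ) / 2) *
          (rexp (-‖X p.1 - X p.2‖ ^ 2 / (4 * a)) - rexp (-‖X p.1 + X p.2‖ ^ 2 / (4 * a))) :=
    fun p => K2 d ha (X p.1) (X p.2)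
  simp only [hL2, hR2]
  rw [integral_const_mul, integral_const_mul, ← mul_assoc]
  congr 1
  have had : (a : ℝ) ^ d = a ^ ((d : ℝ) / 2) * a ^ ((d : ℝ) / 2) := by
    rw [← Real.rpow_add ha, ← Real.rpow_natCast a d]
    norm_num
  have hne : a ^ ((d : ℝ) / 2) ≠ 0 := ne_of_gt (Real.rpow_pos_of_pos ha _)
  rw [Real.div_rpow pi_pos.le ha.le, Real.mul_rpow pi_pos.le ha.le, had]
  field_simp
  ring
end
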